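/- arXiv:1603.02704 — 5 statements merged into one kernel-verified Lean document; each statement's English description precedes it below -/
import Mathlib

section
/- Let Γ : ℕ → ℝ be defined recursively by Γ^(l) = ∑_{k=t}^{L} c(k) (Γ^(l-1))^k where t ≥ 1, each c(k) ≥ 0, and Γ^(l-1) ≥ 0. If for some level l we have Γ^(l) ≤ ε · Γ^(l-1) with 0 ≤ ε ≤ 1, then for every m > l, Γ^(m) ≤ ε^(∑_{r=0}^{m-l} t^r) · Γ^(l-1). -/
/-! Every term of the recursion has degree at least `t`, so shrinking the argument by a factor
`a ∈ [0, 1]` shrinks the next level by at least `a ^ t`. If level `n + 1` is `ε`-suppressed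
relative to level `n`, level `n + 1 + j` is therefore suppressed by `ε ^ S j` with
`S (j + 1) = t * S j + 1`, i.e. `S j = ∑_{r ≤ j} t ^ r`. -/

open Finset

lemma sum_mul_pow_le_pow_mul_of_le {s : Finset ℕ} {t : ℕ} (hts : ∀ k ∈ s, t ≤ k)
    {c : ℕ → ℝ} (hc : ∀ k ∈ s, 0 ≤ c k) {a x y : ℝ} (ha0 : 0 ≤ a) (ha1 : a ≤ 1)
    (hx : 0 ≤ x) (hy : 0 ≤ y) (hyx : y ≤ a * x) :
    ∑ k ∈ s, c k * y ^ k ≤ a ^ t * ∑ k ∈ s, c k * x ^ k := by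
  rw [mul_sum]
  refine sum_le_sum fun k hk => ?_
  have hck := hc k hk
  calc c k * y ^ k ≤ c k * (a * x) ^ k := by gcongr
    _ = c k * (a ^ k * x ^ k) := by rw [mul_pow]
    _ ≤ c k * (a ^ t * x ^ k) := by
      gcongr c k * (?_ * _)
      exact pow_le_pow_of_le_one ha0 ha1 (hts k hk)
    _ = a ^ t * (c k * x ^ k) := by ring

lemma le_pow_geom_sum_mul_of_le_mul {t L : ℕ} {c : ℕ → ℝ} (hc : ∀ k, 0 ≤ c k)
    {Γ : ℕ → ℝ} (hΓ : ∀ n, 0 ≤ Γ n)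
    (hrec : ∀ n, Γ (n + 1) = ∑ k ∈ Icc t L, c k * Γ n ^ k)
    {ε : ℝ} (hε0 : 0 ≤ ε) (hε1 : ε ≤ 1) {n : ℕ} (h : Γ (n + 1) ≤ ε * Γ n) (j : ℕ) :
    Γ (n + 1 + j) ≤ ε ^ (∑ r ∈ range (j + 1), t ^ r) * Γ n := by
  induction j with
  | zero => simpa using h
  | succ j ih =>
    set S := ∑ r ∈ range (j + 1), t ^ r
    have hεS0 : 0 ≤ ε ^ S := pow_nonneg hε0 S
    have hnext : Γ (n + 1 + j + 1) ≤ (ε ^ S) ^ t * Γ (n + 1) := by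
      rw [hrec, hrec n]
      exact sum_mul_pow_le_pow_mul_of_le (fun k hk => (mem_Icc.mp hk).1) (fun k _ => hc k)
        hεS0 (pow_le_one₀ hε0 hε1) (hΓ n) (hΓ _) ih
    calc Γ (n + 1 + (j + 1)) = Γ (n + 1 + j + 1) := rfl
      _ ≤ (ε ^ S) ^ t * (ε * Γ n) := hnext.trans (by gcongr)
      _ = ε ^ (∑ r ∈ range (j + 1 + 1), t ^ r) * Γ n := by
        rw [geom_sum_succ, pow_succ, pow_mul', mul_assoc]

theorem stmt_0_general (t L : ℕ) (c : ℕ → ℝ) (hc : ∀ k, 0 ≤ c k)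
    (Γ : ℕ → ℝ) (hΓpos : ∀ n, 0 ≤ Γ n)
    (hrec : ∀ n, Γ (n + 1) = ∑ k ∈ Finset.Icc t L, c k * Γ n ^ k)
    (l : ℕ) (hl : 1 ≤ l) (ε : ℝ) (hε0 : 0 ≤ ε) (hε1 : ε ≤ 1)
    (h : Γ l ≤ ε * Γ (l - 1)) :
    ∀ m, l < m → Γ m ≤ ε ^ (∑ r ∈ Finset.range (m - l + 1), t ^ r) * Γ (l - 1) := by
  intro m hm
  obtain ⟨n, rfl⟩ : ∃ n, l = n + 1 := ⟨l - 1, by omega⟩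
  obtain ⟨j, rfl⟩ : ∃ j, m = n + 1 + j := ⟨m - (n + 1), by omega⟩
  simpa using le_pow_geom_sum_mul_of_le_mul hc hΓpos hrec hε0 hε1 (by simpa using h) j

/-- Iterated suppression: if `Γ l ≤ ε Γ (l-1)` then for every `m > l`,
`Γ m ≤ ε ^ (∑_{r=0}^{m-l} t^r) * Γ (l-1)`. -/
theorem stmt_0 (t L : ℕ) (ht : 1 ≤ t) (c : ℕ → ℝ) (hc : ∀ k, 0 ≤ c k)
    (Γ : ℕ → ℝ) (hΓpos : ∀ n, 0 ≤ Γ n)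
    (hrec : ∀ n, Γ (n + 1) = ∑ k ∈ Finset.Icc t L, c k * Γ n ^ k)
    (l : ℕ) (hl : 1 ≤ l) (ε : ℝ) (hε0 : 0 ≤ ε) (hε1 : ε ≤ 1)
    (h : Γ l ≤ ε * Γ (l - 1)) :
    ∀ m, l < m → Γ m ≤ ε ^ (∑ r ∈ Finset.range (m - l + 1), t ^ r) * Γ (l - 1) :=
  stmt_0_general t L c hc Γ hΓpos hrec l hl ε hε0 hε1 h
end

section
/- Let Γ : ℕ → ℝ satisfy Γ^(l) = ∑_{k=t}^{L} c(k)(Γ^(l-1))^k with c(k) ≥ 0, t ≥ 1, and Γ^(l-1) ≥ 0. If Γ^(l) ≤ ε Γ^(l-1) for some 0 ≤ ε ≤ 1, then Γ^(l+1) ≤ ε^(t+1) Γ^(l-1). -/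
/-! A polynomial with nonnegative coefficients and no monomials of degree below `t` scales by at
most `ε ^ t` when its argument is scaled by `ε ∈ [0, 1]`. Applying this to `Γ l ≤ ε Γ (l - 1)`
gives `Γ (l + 1) ≤ ε ^ t Γ l`, and one more use of the hypothesis gives the extra factor `ε`. -/

theorem Finset.sum_mul_pow_le_pow_mul_sum {R : Type*} [CommSemiring R] [PartialOrder R]
    [IsOrderedRing R] {s : Finset ℕ} {t : ℕ} (hs : ∀ k ∈ s, t ≤ k) {c : ℕ → R}
    (hc : ∀ k ∈ s, 0 ≤ c k) {x y ε : R} (hx : 0 ≤ x) (hy : 0 ≤ y) (hyx : y ≤ ε * x)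
    (hε0 : 0 ≤ ε) (hε1 : ε ≤ 1) :
    ∑ k ∈ s, c k * y ^ k ≤ ε ^ t * ∑ k ∈ s, c k * x ^ k := by
  rw [Finset.mul_sum]
  refine Finset.sum_le_sum fun k hk => ?_
  calc c k * y ^ k ≤ c k * (ε ^ k * x ^ k) := by
        rw [← mul_pow]
        exact mul_le_mul_of_nonneg_left (pow_le_pow_left₀ hy hyx k) (hc k hk)
    _ ≤ c k * (ε ^ t * x ^ k) := by
        refine mul_le_mul_of_nonneg_left ?_ (hc k hk)
        exact mul_le_mul_of_nonneg_right (pow_le_pow_of_le_one hε0 hε1 (hs k hk)) (pow_nonneg hx k)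
    _ = ε ^ t * (c k * x ^ k) := by ring

theorem stmt_1_general (t L : ℕ) (c : ℕ → ℝ) (hc : ∀ k, 0 ≤ c k)
    (Γ : ℕ → ℝ) (hΓpos : ∀ n, 0 ≤ Γ n)
    (hrec : ∀ n, Γ (n + 1) = ∑ k ∈ Finset.Icc t L, c k * Γ n ^ k)
    (l : ℕ) (hl : 1 ≤ l) (ε : ℝ) (hε0 : 0 ≤ ε) (hε1 : ε ≤ 1)
    (h : Γ l ≤ ε * Γ (l - 1)) :
    Γ (l + 1) ≤ ε ^ (t + 1) * Γ (l - 1) := by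
  have hΓl : Γ l = ∑ k ∈ Finset.Icc t L, c k * Γ (l - 1) ^ k := by
    rw [← hrec, Nat.sub_add_cancel hl]
  have hstep : Γ (l + 1) ≤ ε ^ t * Γ l := by
    have hsum := Finset.sum_mul_pow_le_pow_mul_sum (s := Finset.Icc t L)
      (fun k hk => (Finset.mem_Icc.mp hk).1) (fun k _ => hc k) (hΓpos _) (hΓpos l) h hε0 hε1
    rwa [← hrec, ← hΓl] at hsum
  calc Γ (l + 1) ≤ ε ^ t * Γ l := hstep
    _ ≤ ε ^ t * (ε * Γ (l - 1)) := by gcongr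
    _ = ε ^ (t + 1) * Γ (l - 1) := by ring

/-- Base case of the error-suppression lemma: if `Γ l ≤ ε Γ (l-1)` then
`Γ (l+1) ≤ ε^(t+1) Γ (l-1)`. -/
theorem stmt_1 (t L : ℕ) (ht : 1 ≤ t) (c : ℕ → ℝ) (hc : ∀ k, 0 ≤ c k)
    (Γ : ℕ → ℝ) (hΓpos : ∀ n, 0 ≤ Γ n)
    (hrec : ∀ n, Γ (n + 1) = ∑ k ∈ Finset.Icc t L, c k * Γ n ^ k)
    (l : ℕ) (hl : 1 ≤ l) (ε : ℝ) (hε0 : 0 ≤ ε) (hε1 : ε ≤ 1)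
    (h : Γ l ≤ ε * Γ (l - 1)) :
    Γ (l + 1) ≤ ε ^ (t + 1) * Γ (l - 1) :=
  stmt_1_general t L c hc Γ hΓpos hrec l hl ε hε0 hε1 h
end

section
/- Let f(x) = ∑_{k=t}^{L} c(k) x^k with c(k) ≥ 0, t ≥ 1. If 0 ≤ x ≤ y and f(y) ≤ ε y with 0 ≤ ε ≤ 1, then f(x) ≤ ε y. More generally, the m-fold iterate satisfies f^[m](x) ≤ ε^(∑_{r=0}^{m-1} t^r) y for all m ≥ 1. -/
/-!
A polynomial with nonnegative coefficients whose monomials all have degree at least `t` shrinks by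
a factor `δ ^ t` when its argument is scaled by `δ ∈ [0, 1]`. Hence if `f y ≤ ε y` and
`f^[n] x ≤ ε ^ Sₙ y`, then `f^[n+1] x ≤ (ε ^ Sₙ) ^ t ε y = ε ^ (t Sₙ + 1) y`, and the exponents
`Sₙ₊₁ = t Sₙ + 1`, `S₀ = 0` are the geometric sums `∑_{r<n} t ^ r`.
-/

open Finset

theorem sum_mul_pow_le_pow_mul_sum {s : Finset ℕ} {t : ℕ} (hs : ∀ k ∈ s, t ≤ k) {c : ℕ → ℝ}
    (hc : ∀ k, 0 ≤ c k) {δ z y : ℝ} (hδ0 : 0 ≤ δ) (hδ1 : δ ≤ 1) (hz : 0 ≤ z) (hy : 0 ≤ y)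
    (hzy : z ≤ δ * y) :
    ∑ k ∈ s, c k * z ^ k ≤ δ ^ t * ∑ k ∈ s, c k * y ^ k := by
  rw [mul_sum]
  refine sum_le_sum fun k hk => ?_
  calc c k * z ^ k ≤ c k * (δ ^ k * y ^ k) := by
        rw [← mul_pow]
        exact mul_le_mul_of_nonneg_left (pow_le_pow_left₀ hz hzy k) (hc k)
    _ ≤ c k * (δ ^ t * y ^ k) :=
        mul_le_mul_of_nonneg_left
          (mul_le_mul_of_nonneg_right (pow_le_pow_of_le_one hδ0 hδ1 (hs k hk)) (pow_nonneg hy k))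
          (hc k)
    _ = δ ^ t * (c k * y ^ k) := by ring

theorem iterate_le_pow_geom_sum_mul {g : ℝ → ℝ} {t : ℕ} {ε y : ℝ} (hε0 : 0 ≤ ε) (hε1 : ε ≤ 1)
    (hg0 : ∀ z, 0 ≤ z → 0 ≤ g z)
    (hg : ∀ δ z, 0 ≤ δ → δ ≤ 1 → 0 ≤ z → z ≤ δ * y → g z ≤ δ ^ t * (ε * y))
    {x : ℝ} (hx : 0 ≤ x) (hxy : x ≤ y) (m : ℕ) :
    0 ≤ g^[m] x ∧ g^[m] x ≤ ε ^ (∑ r ∈ range m, t ^ r) * y := by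
  induction m with
  | zero => simpa using ⟨hx, hxy⟩
  | succ n ih =>
    obtain ⟨ih0, ih1⟩ := ih
    rw [Function.iterate_succ_apply', geom_sum_succ]
    refine ⟨hg0 _ ih0, ?_⟩
    calc g (g^[n] x)
        ≤ (ε ^ ∑ r ∈ range n, t ^ r) ^ t * (ε * y) :=
          hg _ _ (pow_nonneg hε0 _) (pow_le_one₀ hε0 hε1) ih0 ih1
      _ = ε ^ (t * ∑ r ∈ range n, t ^ r + 1) * y := by ring

theorem stmt_6_general (t L : ℕ) (c : ℕ → ℝ) (hc : ∀ k, 0 ≤ c k)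
    (f : ℝ → ℝ) (hf : ∀ x, f x = ∑ k ∈ Finset.Icc t L, c k * x ^ k)
    (ε x y : ℝ) (hε0 : 0 ≤ ε) (hε1 : ε ≤ 1)
    (hx : 0 ≤ x) (hxy : x ≤ y) (hy : f y ≤ ε * y) :
    f x ≤ ε * y ∧
    ∀ m : ℕ, 1 ≤ m → f^[m] x ≤ ε ^ (∑ r ∈ Finset.range m, t ^ r) * y := by
  have hf0 : ∀ z, 0 ≤ z → 0 ≤ f z := fun z hz => by
    rw [hf z]
    exact sum_nonneg fun k _ => mul_nonneg (hc k) (pow_nonneg hz k)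
  have hscale : ∀ δ z, 0 ≤ δ → δ ≤ 1 → 0 ≤ z → z ≤ δ * y → f z ≤ δ ^ t * (ε * y) :=
    fun δ z hδ0 hδ1 hz hzy => by
      calc f z ≤ δ ^ t * f y := by
            rw [hf, hf]
            exact sum_mul_pow_le_pow_mul_sum (fun k hk => (mem_Icc.mp hk).1) hc hδ0 hδ1 hz
              (hx.trans hxy) hzy
        _ ≤ δ ^ t * (ε * y) := by gcongr
  have hiter := iterate_le_pow_geom_sum_mul hε0 hε1 hf0 hscale hx hxy
  exact ⟨by simpa using (hiter 1).2, fun m _ => (hiter m).2⟩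

/-- Monotone bounding polynomial: `f x ≤ ε y` for `x ≤ y` with `f y ≤ ε y`,
and the `m`-fold iterate satisfies the geometric-sum suppression bound. -/
theorem stmt_6 (t L : ℕ) (ht : 1 ≤ t) (c : ℕ → ℝ) (hc : ∀ k, 0 ≤ c k)
    (f : ℝ → ℝ) (hf : ∀ x, f x = ∑ k ∈ Finset.Icc t L, c k * x ^ k)
    (ε x y : ℝ) (hε0 : 0 ≤ ε) (hε1 : ε ≤ 1)
    (hx : 0 ≤ x) (hxy : x ≤ y) (hy : f y ≤ ε * y) :
    f x ≤ ε * y ∧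
    ∀ m : ℕ, 1 ≤ m → f^[m] x ≤ ε ^ (∑ r ∈ Finset.range m, t ^ r) * y :=
  stmt_6_general t L c hc f hf ε x y hε0 hε1 hx hxy hy
end

section
/- Let f(x) = ∑_{k=t}^{L} c(k) x^k with c(k) ≥ 0, t ≥ 2, and suppose f(p) < p for some p > 0. Then for all m ≥ 0, the iterates satisfy f^[m](p) ≤ p · (f(p)/p)^(∑_{r=0}^{m-1} t^r) ≤ p · (f(p)/p)^(t^(m-1)) for m ≥ 1, so the logical error rate after m concatenation levels is doubly-exponentially small in m. -/
/-!
Since every monomial of `f` has degree at least `t` and nonnegative coefficient, on `[0, p]` the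
map `f` is dominated by `f p * (x / p) ^ t`. Feeding the bound `f^[n] p ≤ p * ε ^ Sₙ` into it gives
`f^[n+1] p ≤ p * ε * ε ^ (t * Sₙ) = p * ε ^ Sₙ₊₁`, because the exponents `Sₙ = ∑_{r<n} t ^ r`
satisfy `Sₙ₊₁ = t * Sₙ + 1`. Finally `Sₘ ≥ t ^ (m - 1)` and `ε ≤ 1`.
-/

open Finset Set

lemma sum_mul_pow_le_div_pow_mul_sum {s : Finset ℕ} {t : ℕ} (hs : ∀ k ∈ s, t ≤ k)
    {c : ℕ → ℝ} (hc : ∀ k, 0 ≤ c k) {x p : ℝ} (hp : 0 < p) (hx : 0 ≤ x) (hxp : x ≤ p) :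
    ∑ k ∈ s, c k * x ^ k ≤ (x / p) ^ t * ∑ k ∈ s, c k * p ^ k := by
  rw [Finset.mul_sum]
  refine Finset.sum_le_sum fun k hk => ?_
  have hy : (x / p) ^ k ≤ (x / p) ^ t :=
    pow_le_pow_of_le_one (div_nonneg hx hp.le) ((div_le_one hp).mpr hxp) (hs k hk)
  calc c k * x ^ k = c k * p ^ k * (x / p) ^ k := by rw [div_pow]; field_simp
    _ ≤ c k * p ^ k * (x / p) ^ t := by gcongr; exact mul_nonneg (hc k) (pow_nonneg hp.le k)
    _ = (x / p) ^ t * (c k * p ^ k) := by ring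

lemma iterate_le_mul_pow_geom_sum {f : ℝ → ℝ} {p : ℝ} {t : ℕ} (hp : 0 < p)
    (hf_nonneg : MapsTo f (Ici 0) (Ici 0))
    (hf_le : ∀ x, 0 ≤ x → x ≤ p → f x ≤ f p * (x / p) ^ t) (hfp : f p ≤ p) (m : ℕ) :
    f^[m] p ≤ p * (f p / p) ^ (∑ r ∈ range m, t ^ r) := by
  have hfp0 : 0 ≤ f p := hf_nonneg hp.le
  have hfp_eq : f p = p * (f p / p) := (mul_div_cancel₀ _ hp.ne').symm
  set ε := f p / p
  have hε0 : 0 ≤ ε := div_nonneg hfp0 hp.le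
  have hε1 : ε ≤ 1 := (div_le_one hp).mpr hfp
  induction m with
  | zero => simp
  | succ n ih =>
    set x := f^[n] p
    have hx0 : 0 ≤ x := hf_nonneg.iterate n hp.le
    have hxp : x ≤ p := ih.trans (mul_le_of_le_one_right hp.le (pow_le_one₀ hε0 hε1))
    have hx_div : x / p ≤ ε ^ (∑ r ∈ range n, t ^ r) := by
      rwa [div_le_iff₀ hp, mul_comm]
    rw [Function.iterate_succ_apply']
    calc f x ≤ f p * (x / p) ^ t := hf_le x hx0 hxp
      _ ≤ f p * (ε ^ (∑ r ∈ range n, t ^ r)) ^ t := by gcongr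
      _ = p * ε ^ (∑ r ∈ range (n + 1), t ^ r) := by
          rw [geom_sum_succ, pow_succ, pow_mul', hfp_eq]
          ring

lemma pow_pred_le_geom_sum (t : ℕ) {m : ℕ} (hm : 1 ≤ m) :
    t ^ (m - 1) ≤ ∑ r ∈ range m, t ^ r :=
  Finset.single_le_sum (fun r _ => Nat.zero_le (t ^ r)) (Finset.mem_range.mpr (by omega))

theorem stmt_9_general (t L : ℕ) (c : ℕ → ℝ) (hc : ∀ k, 0 ≤ c k)
    (f : ℝ → ℝ) (hf : ∀ x, f x = ∑ k ∈ Finset.Icc t L, c k * x ^ k)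
    (p : ℝ) (hp : 0 < p) (h : f p < p) :
    ∀ m : ℕ, 1 ≤ m →
      f^[m] p ≤ p * (f p / p) ^ (∑ r ∈ Finset.range m, t ^ r) ∧
      p * (f p / p) ^ (∑ r ∈ Finset.range m, t ^ r) ≤ p * (f p / p) ^ (t ^ (m - 1)) := by
  intro m hm
  have hf_nonneg : MapsTo f (Ici 0) (Ici 0) := fun x (hx : 0 ≤ x) => by
    rw [Set.mem_Ici, hf]
    exact Finset.sum_nonneg fun k _ => mul_nonneg (hc k) (pow_nonneg hx k)
  have hf_le : ∀ x, 0 ≤ x → x ≤ p → f x ≤ f p * (x / p) ^ t := fun x hx hxp => by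
    rw [hf, hf, mul_comm]
    exact sum_mul_pow_le_div_pow_mul_sum (fun k hk => (Finset.mem_Icc.mp hk).1) hc hp hx hxp
  have hε0 : 0 ≤ f p / p := div_nonneg (hf_nonneg hp.le) hp.le
  have hε1 : f p / p ≤ 1 := (div_le_one hp).mpr h.le
  exact ⟨iterate_le_mul_pow_geom_sum hp hf_nonneg hf_le h.le m,
    mul_le_mul_of_nonneg_left (pow_le_pow_of_le_one hε0 hε1 (pow_pred_le_geom_sum t hm)) hp.le⟩

/-- Doubly-exponential suppression of the iterates below the pseudo-threshold. -/
theorem stmt_9 (t L : ℕ) (ht : 2 ≤ t) (c : ℕ → ℝ) (hc : ∀ k, 0 ≤ c k)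
    (f : ℝ → ℝ) (hf : ∀ x, f x = ∑ k ∈ Finset.Icc t L, c k * x ^ k)
    (p : ℝ) (hp : 0 < p) (h : f p < p) :
    ∀ m : ℕ, 1 ≤ m →
      f^[m] p ≤ p * (f p / p) ^ (∑ r ∈ Finset.range m, t ^ r) ∧
      p * (f p / p) ^ (∑ r ∈ Finset.range m, t ^ r) ≤ p * (f p / p) ^ (t ^ (m - 1)) :=
  stmt_9_general t L c hc f hf p hp h
end

section
/- Let f(x) = ∑_{k=t}^{L} c(k) x^k with c(k) ≥ 0, t ≥ 2, and fix ε ∈ (0,1) and p ≥ 0 with f(f(p)) ≤ ε f(p). Define Γ_1 = f(p) and Γ_{m+1} = f(Γ_m). Then for all m ≥ 2, Γ_m ≤ ε^(t^(m-2)) Γ_1, and in particular lim_{m→∞} Γ_m = 0. -/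
/-!
Since every monomial of `f` has degree at least `t`, shrinking the argument by a factor
`a ∈ [0, 1]` shrinks `f` by at least `a ^ t`. Once `Γ₂ ≤ ε Γ₁`, an induction using this
scaling and the monotonicity of `f` on `[0, ∞)` gives `Γ_{n+2} ≤ ε ^ (t ^ n) Γ₁`.
-/

open Filter Topology

section NonnegCoeffPolynomial

variable {s : Finset ℕ} {c : ℕ → ℝ}

theorem sum_mul_pow_nonneg (hc : ∀ k, 0 ≤ c k) {x : ℝ} (hx : 0 ≤ x) :
    0 ≤ ∑ k ∈ s, c k * x ^ k :=
  Finset.sum_nonneg fun k _ => mul_nonneg (hc k) (pow_nonneg hx k)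

theorem sum_mul_pow_le_sum_mul_pow (hc : ∀ k, 0 ≤ c k) {x y : ℝ} (hx : 0 ≤ x) (hxy : x ≤ y) :
    ∑ k ∈ s, c k * x ^ k ≤ ∑ k ∈ s, c k * y ^ k :=
  Finset.sum_le_sum fun k _ => mul_le_mul_of_nonneg_left (pow_le_pow_left₀ hx hxy k) (hc k)

theorem sum_mul_pow_mul_le {t : ℕ} (hs : ∀ k ∈ s, t ≤ k) (hc : ∀ k, 0 ≤ c k) {a x : ℝ}
    (ha₀ : 0 ≤ a) (ha₁ : a ≤ 1) (hx : 0 ≤ x) :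
    ∑ k ∈ s, c k * (a * x) ^ k ≤ a ^ t * ∑ k ∈ s, c k * x ^ k := by
  rw [Finset.mul_sum]
  refine Finset.sum_le_sum fun k hk => ?_
  calc c k * (a * x) ^ k = a ^ k * (c k * x ^ k) := by ring
    _ ≤ a ^ t * (c k * x ^ k) :=
      mul_le_mul_of_nonneg_right (pow_le_pow_of_le_one ha₀ ha₁ (hs k hk))
        (mul_nonneg (hc k) (pow_nonneg hx k))

end NonnegCoeffPolynomial

theorem nonneg_of_recurrence {f : ℝ → ℝ} {u : ℕ → ℝ} (f_nonneg : ∀ x, 0 ≤ x → 0 ≤ f x)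
    (hu₀ : 0 ≤ u 0) (hu : ∀ n, u (n + 1) = f (u n)) (n : ℕ) : 0 ≤ u n := by
  induction n with
  | zero => exact hu₀
  | succ n ih => rw [hu]; exact f_nonneg _ ih

theorem le_pow_pow_mul_of_recurrence {f : ℝ → ℝ} {t : ℕ} {ε : ℝ} {u : ℕ → ℝ}
    (f_nonneg : ∀ x, 0 ≤ x → 0 ≤ f x) (f_mono : MonotoneOn f (Set.Ici 0))
    (f_scale : ∀ a x, 0 ≤ a → a ≤ 1 → 0 ≤ x → f (a * x) ≤ a ^ t * f x)
    (hε₀ : 0 ≤ ε) (hε₁ : ε ≤ 1) (hu₀ : 0 ≤ u 0) (hu : ∀ n, u (n + 1) = f (u n))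
    (hcross : u 1 ≤ ε * u 0) (n : ℕ) :
    u (n + 1) ≤ ε ^ (t ^ n) * u 0 := by
  induction n with
  | zero => simpa using hcross
  | succ n ih =>
    have hpow₀ : 0 ≤ ε ^ t ^ n := pow_nonneg hε₀ _
    calc u (n + 2) = f (u (n + 1)) := hu _
      _ ≤ f (ε ^ t ^ n * u 0) :=
        f_mono (nonneg_of_recurrence f_nonneg hu₀ hu _) (mul_nonneg hpow₀ hu₀) ih
      _ ≤ (ε ^ t ^ n) ^ t * f (u 0) := f_scale _ _ hpow₀ (pow_le_one₀ hε₀ hε₁) hu₀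
      _ ≤ (ε ^ t ^ n) ^ t * (ε * u 0) := by
        rw [← hu]; exact mul_le_mul_of_nonneg_left hcross (pow_nonneg hpow₀ t)
      _ ≤ (ε ^ t ^ n) ^ t * u 0 := by
        gcongr
        exact mul_le_of_le_one_left hu₀ hε₁
      _ = ε ^ t ^ (n + 1) * u 0 := by rw [← pow_mul, pow_succ]

theorem tendsto_pow_pow_atTop_nhds_zero {ε : ℝ} {t : ℕ} (hε₀ : 0 ≤ ε) (hε₁ : ε < 1)
    (ht : 1 < t) : Tendsto (fun n => ε ^ t ^ n) atTop (𝓝 0) :=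
  (tendsto_pow_atTop_nhds_zero_of_lt_one hε₀ hε₁).comp (tendsto_pow_atTop_atTop_of_one_lt ht)

/-- Doubly-exponential decay of level-`m` logical error bounds below the
crossing point of the level-1 and level-2 bounding polynomials. -/
theorem stmt_14 (t L : ℕ) (ht : 2 ≤ t) (c : ℕ → ℝ) (hc : ∀ k, 0 ≤ c k)
    (f : ℝ → ℝ) (hf : ∀ x, f x = ∑ k ∈ Finset.Icc t L, c k * x ^ k)
    (ε p : ℝ) (hε0 : 0 < ε) (hε1 : ε < 1) (hp : 0 ≤ p)
    (hcross : f (f p) ≤ ε * f p)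
    (Γ : ℕ → ℝ) (hΓ1 : Γ 1 = f p) (hΓ : ∀ m, Γ (m + 1) = f (Γ m)) :
    (∀ m : ℕ, 2 ≤ m → Γ m ≤ ε ^ (t ^ (m - 2)) * Γ 1) ∧
    Tendsto Γ atTop (nhds 0) := by
  obtain rfl : f = fun x => ∑ k ∈ Finset.Icc t L, c k * x ^ k := funext hf
  have f_nonneg (x : ℝ) (hx : 0 ≤ x) : 0 ≤ ∑ k ∈ Finset.Icc t L, c k * x ^ k :=
    sum_mul_pow_nonneg hc hx
  have hΓ1_nonneg : 0 ≤ Γ 1 := hΓ1 ▸ f_nonneg p hp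
  have bound (n : ℕ) : Γ (n + 2) ≤ ε ^ t ^ n * Γ 1 :=
    le_pow_pow_mul_of_recurrence (u := fun n => Γ (n + 1)) f_nonneg
      (fun _ hx _ _ hxy => sum_mul_pow_le_sum_mul_pow hc hx hxy)
      (fun _ _ => sum_mul_pow_mul_le (fun _ hk => (Finset.mem_Icc.mp hk).1) hc)
      hε0.le hε1.le hΓ1_nonneg (fun n => hΓ (n + 1)) (by rw [hΓ, hΓ1]; exact hcross) n
  refine ⟨fun m hm => ?_, ?_⟩
  · obtain ⟨n, rfl⟩ := Nat.exists_eq_add_of_le' hm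
    simpa using bound n
  · rw [← tendsto_add_atTop_iff_nat 2]
    refine squeeze_zero (fun n => ?_) bound ?_
    · exact nonneg_of_recurrence (u := fun n => Γ (n + 1)) f_nonneg hΓ1_nonneg
        (fun n => hΓ (n + 1)) (n + 1)
    · simpa using (tendsto_pow_pow_atTop_nhds_zero hε0.le hε1 ht).mul_const (Γ 1)
end
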